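/- arXiv:math/0502544 — 4 statements merged into one kernel-verified Lean document; each statement's English description precedes it below -/
import Mathlib

section
/- Let F ⊂ ℝ be a nonempty closed set (viewed as a subset of [0,2π)), let d_F(x) = dist(x,F), F_t = {x ∈ [0,2π) : d_F(x) ≤ t}, and φ(t) = |F_t| (Lebesgue measure). Then for 0 < t₁ < t₂ smaller than half the length of the longest adjacent interval of F, φ(t₂) − φ(t₁) ≥ t₂ − t₁; consequently the Stieltjes measure dφ dominates Lebesgue measure on a neighborhood of 0 and the integral ∫₀ dφ(s)/s diverges. -/
open Real MeasureTheory Set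

/-- If `F ⊆ [0, 2π)` is a nonempty closed set of measure zero with an adjacent
(complementary) interval `(a,b)`, `φ(t) = |{x ∈ [0,2π) : dist(x,F) ≤ t}|`, then for
`0 < t₁ < t₂ < (b-a)/2` one has `φ(t₂) - φ(t₁) ≥ t₂ - t₁`; consequently the Stieltjes
measure `dφ` dominates Lebesgue measure near `0` and `∫₀ dφ(s)/s` diverges. -/
theorem stieltjes_dominates_lebesgue_and_diverges
    (F : Set ℝ) (hFcl : IsClosed F) (hFne : F.Nonempty)
    (hFsub : F ⊆ Ico 0 (2 * π)) (hF0 : volume F = 0)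
    (a b : ℝ) (haF : a ∈ F) (hbF : b ∈ F) (hab : a < b)
    (hgap : Ioo a b ∩ F = ∅)
    (φ : ℝ → ℝ)
    (hφ : ∀ t : ℝ, φ t = (volume {x ∈ Ico 0 (2 * π) | Metric.infDist x F ≤ t}).toReal)
    (Φ : StieltjesFunction ℝ) (hΦ : ∀ t : ℝ, 0 ≤ t → Φ t = φ t)
    (hΦneg : ∀ t : ℝ, t < 0 → Φ t = 0) :
    (∀ t₁ t₂ : ℝ, 0 < t₁ → t₁ < t₂ → t₂ < (b - a) / 2 → t₂ - t₁ ≤ φ t₂ - φ t₁) ∧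
    (∀ ε : ℝ, 0 < ε →
      ∫⁻ s in Ioc (0 : ℝ) ε, ENNReal.ofReal (1 / s) ∂Φ.measure = ⊤) := by
  have ha0 : 0 ≤ a := (hFsub haF).1
  have hb2π : b < 2 * π := (hFsub hbF).2
  -- the sets F_t
  set S : ℝ → Set ℝ := fun t => {x ∈ Ico 0 (2 * π) | Metric.infDist x F ≤ t} with hS
  have hSmeas : ∀ t, MeasurableSet (S t) := by
    intro t
    exact measurableSet_Ico.inter
      (measurableSet_le (Metric.continuous_infDist_pt F).measurable measurable_const)
  have hSfin : ∀ t, volume (S t) < ⊤ := by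
    intro t
    calc volume (S t) ≤ volume (Ico 0 (2 * π)) := measure_mono fun x hx => hx.1
      _ < ⊤ := by rw [Real.volume_Ico]; exact ENNReal.ofReal_lt_top
  -- key claim
  have key : ∀ t₁ t₂ : ℝ, 0 < t₁ → t₁ < t₂ → t₂ < (b - a) / 2 → t₂ - t₁ ≤ φ t₂ - φ t₁ := by
    intro t₁ t₂ ht₁ ht₁₂ ht₂
    have hsub1 : S t₁ ⊆ S t₂ := fun x hx => ⟨hx.1, hx.2.trans ht₁₂.le⟩
    have hsub2 : Ioc (a + t₁) (a + t₂) ⊆ S t₂ \ S t₁ := by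
      intro x hx
      have hxa : a < x := lt_of_le_of_lt (le_add_of_nonneg_right ht₁.le) hx.1
      have hxb : x < b := by nlinarith [hx.2]
      have hd2 : Metric.infDist x F ≤ t₂ := by
        have := Metric.infDist_le_dist_of_mem (x := x) haF
        rw [Real.dist_eq, abs_of_pos (by linarith)] at this
        linarith [hx.2]
      have hd1 : t₁ < Metric.infDist x F := by
        have hge : ∀ y ∈ F, min (x - a) (b - x) ≤ dist x y := by
          intro y hy
          have hynot : y ∉ Ioo a b := by
            intro hmem
            exact absurd (mem_inter hmem hy) (by rw [hgap]; exact notMem_empty _)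
          rw [Real.dist_eq]
          rcases le_or_gt y a with h | h
          · have : x - a ≤ |x - y| := by
              rw [abs_of_pos (by linarith)]; linarith
            exact le_trans (min_le_left _ _) this
          · have hb : b ≤ y := by
              by_contra hby
              push_neg at hby
              exact hynot ⟨h, hby⟩
            have : b - x ≤ |x - y| := by
              rw [abs_of_nonpos (by linarith)]; linarith
            exact le_trans (min_le_right _ _) this
        have hmin : min (x - a) (b - x) ≤ Metric.infDist x F := by
          by_contra hcon
          push_neg at hcon
          obtain ⟨y, hy, hlt⟩ := (Metric.infDist_lt_iff hFne).mp hcon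
          exact absurd (hge y hy) (not_le.mpr hlt)
        have h1 : t₁ < x - a := by linarith [hx.1]
        have h2 : t₁ < b - x := by nlinarith [hx.2]
        exact lt_of_lt_of_le (lt_min h1 h2) hmin
      constructor
      · exact ⟨⟨by linarith, by linarith⟩, hd2⟩
      · intro hmem
        exact absurd hmem.2 (not_le.mpr hd1)
    -- measure estimate
    have hdisj : Disjoint (S t₁) (Ioc (a + t₁) (a + t₂)) := by
      rw [Set.disjoint_left]
      intro x hxS hxI
      exact (hsub2 hxI).2 hxS
    have hunion : S t₁ ∪ Ioc (a + t₁) (a + t₂) ⊆ S t₂ :=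
      union_subset hsub1 (fun x hx => (hsub2 hx).1)
    have hvol : volume (S t₁) + ENNReal.ofReal (t₂ - t₁) ≤ volume (S t₂) := by
      have := measure_union (μ := volume) hdisj measurableSet_Ioc
      calc volume (S t₁) + ENNReal.ofReal (t₂ - t₁)
          = volume (S t₁ ∪ Ioc (a + t₁) (a + t₂)) := by
            rw [this, Real.volume_Ioc]; ring_nf
        _ ≤ volume (S t₂) := measure_mono hunion
    rw [hφ t₁, hφ t₂]
    have h1 := hSfin t₁
    have h2 := hSfin t₂
    rw [← hS] at *
    have := ENNReal.toReal_mono h2.ne hvol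
    rw [ENNReal.toReal_add h1.ne ENNReal.ofReal_ne_top,
      ENNReal.toReal_ofReal (by linarith)] at this
    linarith
  refine ⟨key, ?_⟩
  intro ε hε
  set δ : ℝ := min ε ((b - a) / 2) / 2 with hδ
  have hδpos : 0 < δ := by
    have : 0 < (b - a) / 2 := by linarith
    positivity
  have hδε : δ ≤ ε := by
    have h1 : min ε ((b - a) / 2) ≤ ε := min_le_left _ _
    linarith [hε.le]
  have hδhalf : δ < (b - a) / 2 := by
    have h1 : min ε ((b - a) / 2) ≤ (b - a) / 2 := min_le_right _ _
    have : 0 < (b - a) / 2 := by linarith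
    linarith
  set I : ℕ → Set ℝ := fun n => Ioc (δ / 2 ^ (n + 1)) (δ / 2 ^ n) with hI
  have hIsub : ∀ n, I n ⊆ Ioc (0 : ℝ) ε := by
    intro n x hx
    constructor
    · exact lt_trans (by positivity) hx.1
    · refine le_trans hx.2 (le_trans ?_ hδε)
      apply div_le_self hδpos.le
      exact one_le_pow₀ (by norm_num)
  have hIdisj : Pairwise (Function.onFun Disjoint I) := by
    have hkey : ∀ m n : ℕ, m < n → Disjoint (I m) (I n) := by
      intro m n h
      rw [Set.disjoint_left]
      intro x hxm hxn
      have h1 : δ / 2 ^ (m + 1) < x := hxm.1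
      have h2 : x ≤ δ / 2 ^ n := hxn.2
      have h3 : δ / 2 ^ n ≤ δ / 2 ^ (m + 1) := by
        apply div_le_div_of_nonneg_left hδpos.le (by positivity)
        exact pow_le_pow_right₀ (by norm_num) (by omega)
      linarith
    intro m n hmn
    rcases lt_or_gt_of_ne hmn with h | h
    · exact hkey m n h
    · exact (hkey n m h).symm
  have hmeasI : ∀ n, ENNReal.ofReal (δ / 2 ^ (n + 1)) ≤ Φ.measure (I n) := by
    intro n
    rw [hI, StieltjesFunction.measure_Ioc]
    have h1 : (0:ℝ) < δ / 2 ^ (n + 1) := by positivity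
    have h2 : δ / 2 ^ (n + 1) < δ / 2 ^ n := by
      apply div_lt_div_of_pos_left hδpos (by positivity)
      exact pow_lt_pow_right₀ (by norm_num) (by omega)
    have h3 : δ / 2 ^ n < (b - a) / 2 := by
      refine lt_of_le_of_lt ?_ hδhalf
      apply div_le_self hδpos.le
      exact one_le_pow₀ (by norm_num)
    have hkey := key _ _ h1 h2 h3
    rw [hΦ _ (by positivity), hΦ _ h1.le]
    apply ENNReal.ofReal_le_ofReal
    have : δ / 2 ^ n - δ / 2 ^ (n + 1) = δ / 2 ^ (n + 1) := by
      field_simp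
      ring
    linarith [hkey, this.ge]
  have hint : ∀ n, (ENNReal.ofReal (1/2 : ℝ)) ≤ ∫⁻ s in I n, ENNReal.ofReal (1 / s) ∂Φ.measure := by
    intro n
    have hc : ∀ s ∈ I n, ENNReal.ofReal (2 ^ n / δ) ≤ ENNReal.ofReal (1 / s) := by
      intro s hs
      apply ENNReal.ofReal_le_ofReal
      rw [div_le_div_iff₀ hδpos (lt_trans (by positivity) hs.1)]
      calc 2 ^ n * s ≤ 2 ^ n * (δ / 2 ^ n) := by
            apply mul_le_mul_of_nonneg_left hs.2 (by positivity)
        _ = δ := by field_simp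
        _ = 1 * δ := (one_mul δ).symm
    calc ENNReal.ofReal (1/2 : ℝ)
        = ENNReal.ofReal ((2 ^ n / δ) * (δ / 2 ^ (n + 1))) := by
          congr 1
          field_simp
          ring
      _ ≤ ENNReal.ofReal (2 ^ n / δ) * ENNReal.ofReal (δ / 2 ^ (n + 1)) := by
          rw [← ENNReal.ofReal_mul (by positivity)]
      _ ≤ ENNReal.ofReal (2 ^ n / δ) * Φ.measure (I n) := by
          exact mul_le_mul_right (hmeasI n) _
      _ = ∫⁻ _ in I n, ENNReal.ofReal (2 ^ n / δ) ∂Φ.measure := by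
          rw [setLIntegral_const]
      _ ≤ ∫⁻ s in I n, ENNReal.ofReal (1 / s) ∂Φ.measure :=
          setLIntegral_mono' measurableSet_Ioc hc
  refine eq_top_iff.mpr ?_
  calc (⊤ : ENNReal) = ∑' _ : ℕ, ENNReal.ofReal (1/2 : ℝ) := by
        rw [ENNReal.tsum_const_eq_top_of_ne_zero (by simp)]
    _ ≤ ∑' n, ∫⁻ s in I n, ENNReal.ofReal (1 / s) ∂Φ.measure :=
        ENNReal.tsum_le_tsum hint
    _ = ∫⁻ s in ⋃ n, I n, ENNReal.ofReal (1 / s) ∂Φ.measure :=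
        (lintegral_iUnion (fun n => measurableSet_Ioc) hIdisj _).symm
    _ ≤ ∫⁻ s in Ioc (0 : ℝ) ε, ENNReal.ofReal (1 / s) ∂Φ.measure :=
        lintegral_mono_set (iUnion_subset hIsub)
end

section
/- Suppose a sequence of complex numbers (G_n)_{n≥0} satisfies G_n ≤ C·C₁^n·n^{n/β} for constants C, C₁ > 0 and β ∈ (0,1). Define T(s) = inf_{k≥0} (G_k/k!) s^k for s > 0. Then there exist constants C', C'' > 0 and s₀ > 0 such that T(s) ≤ C' exp(−C'' s^{−β/(1−β)}) for all 0 < s ≤ s₀. -/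
open Real Set

/-- If `G_n ≤ C C₁ⁿ n^{n/β}` with `β ∈ (0,1)`, then the function
`T(s) = inf_{k ≥ 0} (G_k / k!) s^k` satisfies `T(s) ≤ C' exp(-C'' s^{-β/(1-β)})`
for all sufficiently small `s > 0`. -/
theorem gevrey_infimum_bound (β : ℝ) (hβ : β ∈ Ioo (0 : ℝ) 1)
    (G : ℕ → ℝ) (hGnonneg : ∀ n : ℕ, 0 ≤ G n)
    (C C₁ : ℝ) (hC : 0 < C) (hC₁ : 0 < C₁)
    (hG : ∀ n : ℕ, G n ≤ C * C₁ ^ n * (n : ℝ) ^ ((n : ℝ) / β))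
    (T : ℝ → ℝ)
    (hT : ∀ s : ℝ, T s = ⨅ k : ℕ, (G k / (Nat.factorial k : ℝ)) * s ^ k) :
    ∃ C' C'' s₀ : ℝ, 0 < C' ∧ 0 < C'' ∧ 0 < s₀ ∧
      ∀ s : ℝ, 0 < s → s ≤ s₀ →
        T s ≤ C' * Real.exp (-C'' * s ^ (-(β / (1 - β)))) := by
  obtain ⟨hβ0, hβ1⟩ := hβ
  have h1β : (0:ℝ) < 1 - β := by linarith
  set α := β / (1 - β) with hαdef
  have hα : 0 < α := div_pos hβ0 h1β
  have hinv : (1 - β) / β = 1 / α := by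
    rw [hαdef]; field_simp
  refine ⟨C * Real.exp 1, (Real.exp 2 * C₁)⁻¹ ^ α, 1, by positivity, by positivity,
    one_pos, ?_⟩
  intro s hs hs1
  rw [hT s]
  set b := Real.exp 2 * C₁ * s with hbdef
  have hb : 0 < b := by positivity
  set x := b⁻¹ ^ α with hxdef
  have hx : 0 ≤ x := by positivity
  set k := ⌊x⌋₊ with hkdef
  have hbdd : BddBelow (Set.range fun k : ℕ => (G k / (Nat.factorial k : ℝ)) * s ^ k) := by
    refine ⟨0, ?_⟩
    rintro _ ⟨n, rfl⟩
    exact mul_nonneg (div_nonneg (hGnonneg n) (by positivity)) (by positivity)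
  refine (ciInf_le hbdd k).trans ?_
  -- key step: the k-th term is at most C * exp(-k)
  have key : (G k / (Nat.factorial k : ℝ)) * s ^ k ≤ C * Real.exp (-(k:ℝ)) := by
    rcases Nat.eq_zero_or_pos k with hk0 | hk1
    · rw [hk0]
      simp only [Nat.factorial_zero, Nat.cast_one, pow_zero, Nat.cast_zero, div_one, mul_one,
        neg_zero, Real.exp_zero]
      have := hG 0
      simpa using this
    · have hkpos : (0:ℝ) < (k:ℝ) := by exact_mod_cast hk1
      have hkx : (k:ℝ) ≤ x := Nat.floor_le hx
      -- k^{1/α} ≤ b⁻¹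
      have hk1α : (k:ℝ) ^ (1/α) ≤ b⁻¹ := by
        have h1 : (k:ℝ) ^ (1/α) ≤ x ^ (1/α) :=
          Real.rpow_le_rpow hkpos.le hkx (by positivity)
        have h2 : x ^ (1/α) = b⁻¹ := by
          rw [hxdef, ← Real.rpow_mul (inv_nonneg.mpr hb.le),
            mul_one_div_cancel hα.ne', Real.rpow_one]
        linarith
      have hkα0 : (0:ℝ) ≤ (k:ℝ) ^ (1/α) := by positivity
      -- split the rpow
      have hsplit : (k:ℝ) / β = (k:ℝ) + (k:ℝ) * (1/α) := by
        rw [← hinv]; field_simp; ring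
      have hrpow : (k:ℝ) ^ ((k:ℝ)/β) = (k:ℝ)^k * ((k:ℝ)^(1/α))^k := by
        rw [hsplit, Real.rpow_add hkpos, Real.rpow_natCast, mul_comm (k:ℝ) (1/α),
          Real.rpow_mul hkpos.le, Real.rpow_natCast]
      have hfact : (k:ℝ)^k / (Nat.factorial k : ℝ) ≤ Real.exp 1 ^ k := by
        have := Real.pow_div_factorial_le_exp _ hkpos.le k
        calc (k:ℝ)^k / (Nat.factorial k : ℝ) ≤ Real.exp (k:ℝ) := this
          _ = Real.exp 1 ^ k := by rw [← Real.exp_nat_mul, mul_one]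
      have hfactpos : (0:ℝ) < (Nat.factorial k : ℝ) := by positivity
      have hsmall : Real.exp 1 * C₁ * s * (k:ℝ)^(1/α) ≤ Real.exp (-1) := by
        have h3 : Real.exp 1 * C₁ * s * (k:ℝ)^(1/α) ≤ Real.exp 1 * C₁ * s * b⁻¹ := by
          have : (0:ℝ) ≤ Real.exp 1 * C₁ * s := by positivity
          exact mul_le_mul_of_nonneg_left hk1α this
        have h4 : Real.exp 1 * C₁ * s * b⁻¹ = Real.exp (-1) := by
          rw [hbdef]
          rw [show (-1:ℝ) = 1 - 2 by norm_num, Real.exp_sub]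
          field_simp
        linarith
      calc (G k / (Nat.factorial k : ℝ)) * s ^ k
          ≤ ((C * C₁^k * (k:ℝ)^((k:ℝ)/β)) / (Nat.factorial k : ℝ)) * s ^ k := by
            apply mul_le_mul_of_nonneg_right _ (by positivity)
            exact div_le_div_of_nonneg_right (hG k) hfactpos.le
        _ = C * ((k:ℝ)^k / (Nat.factorial k : ℝ)) * (C₁ * s * (k:ℝ)^(1/α))^k := by
            rw [hrpow, mul_pow, mul_pow]; field_simp
        _ ≤ C * Real.exp 1 ^ k * (C₁ * s * (k:ℝ)^(1/α))^k := by
            apply mul_le_mul_of_nonneg_right _ (by positivity)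
            exact mul_le_mul_of_nonneg_left hfact hC.le
        _ = C * (Real.exp 1 * C₁ * s * (k:ℝ)^(1/α))^k := by
            rw [mul_assoc, ← mul_pow]; ring_nf
        _ ≤ C * (Real.exp (-1))^k := by
            apply mul_le_mul_of_nonneg_left _ hC.le
            exact pow_le_pow_left₀ (by positivity) hsmall k
        _ = C * Real.exp (-(k:ℝ)) := by
            rw [← Real.exp_nat_mul]; ring_nf
  refine key.trans ?_
  have hxk : x - 1 ≤ (k:ℝ) := by
    have := Nat.lt_floor_add_one x
    linarith
  have hexp : Real.exp (-(k:ℝ)) ≤ Real.exp 1 * Real.exp (-x) := by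
    rw [← Real.exp_add]
    exact Real.exp_le_exp.mpr (by linarith)
  have hxeq : x = (Real.exp 2 * C₁)⁻¹ ^ α * s ^ (-α) := by
    rw [hxdef, hbdef, show (Real.exp 2 * C₁ * s)⁻¹ = (Real.exp 2 * C₁)⁻¹ * s⁻¹ by
      rw [mul_inv], Real.mul_rpow (by positivity) (by positivity),
      Real.inv_rpow hs.le, ← Real.rpow_neg hs.le]
  calc C * Real.exp (-(k:ℝ)) ≤ C * (Real.exp 1 * Real.exp (-x)) :=
        mul_le_mul_of_nonneg_left hexp hC.le
    _ = C * Real.exp 1 * Real.exp (-((Real.exp 2 * C₁)⁻¹ ^ α) * s ^ (-α)) := by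
        rw [hxeq]; ring_nf
end

section
/- Let F : ℕ → ℝ satisfy Σ_n n|F(n+2) − F(n)| < ∞ and F(n) → 0, and for fixed n ≥ 1 define the operator 𝓕_n on ℓ¹(ℤ₊) by (𝓕_n y)_j = Σ_{m=0}^∞ F(2n+m+j) y_m. Then 𝓕_n is a bounded (indeed compact) operator on ℓ¹ with ‖𝓕_n‖ ≤ Σ_{j=0}^∞ |F(2n+j)|, and ‖𝓕_n‖ → 0 as n → ∞. -/
open Filter

namespace GLaux

noncomputable section

open Topology ENNReal

abbrev X := lp (fun _ : ℕ => ℂ) 1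

lemma l1_summable (y : X) : Summable fun m => ‖(y : ∀ _ : ℕ, ℂ) m‖ := by
  have h := (lp.memℓp y).summable (by norm_num : (0:ℝ) < (1 : ℝ≥0∞).toReal)
  simpa using h

lemma l1_norm (y : X) : ‖y‖ = ∑' m, ‖(y : ∀ _ : ℕ, ℂ) m‖ := by
  have h := lp.norm_eq_tsum_rpow (by norm_num : (0:ℝ) < (1 : ℝ≥0∞).toReal) y
  simpa using h

lemma norm_coord (r : ℝ) (z : ℂ) : ‖(r : ℂ) * z‖ = |r| * ‖z‖ := by
  rw [norm_mul, Complex.norm_real, Real.norm_eq_abs]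

lemma summable_mul_of_bounded {c : ℕ → ℝ} {C0 : ℝ} (hc : ∀ m, |c m| ≤ C0) (y : X) :
    Summable fun m => (c m : ℂ) * (y : ∀ _ : ℕ, ℂ) m := by
  apply Summable.of_norm
  refine Summable.of_nonneg_of_le (fun m => norm_nonneg _) (fun m => ?_) ((l1_summable y).mul_left C0)
  rw [norm_coord]
  exact mul_le_mul_of_nonneg_right (hc m) (norm_nonneg _)

section Kernel

variable {K : ℕ → ℕ → ℝ} {C : ℝ}

lemma kb (hKs : ∀ m, Summable fun j => |K j m|) (hKC : ∀ m, (∑' j, |K j m|) ≤ C)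
    (j m : ℕ) : |K j m| ≤ C :=
  le_trans (Summable.le_tsum (hKs m) j fun _ _ => abs_nonneg _) (hKC m)

lemma hC0 (hKs : ∀ m, Summable fun j => |K j m|) (hKC : ∀ m, (∑' j, |K j m|) ≤ C) :
    0 ≤ C :=
  le_trans (tsum_nonneg fun _ => abs_nonneg _) (hKC 0)

lemma row_norm_summable (hKs : ∀ m, Summable fun j => |K j m|)
    (hKC : ∀ m, (∑' j, |K j m|) ≤ C) (y : X) (j : ℕ) :
    Summable fun m => ‖(K j m : ℂ) * (y : ∀ _ : ℕ, ℂ) m‖ := by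
  refine Summable.of_nonneg_of_le (fun m => norm_nonneg _) (fun m => ?_)
    ((l1_summable y).mul_left C)
  rw [norm_coord]
  exact mul_le_mul_of_nonneg_right (kb hKs hKC j m) (norm_nonneg _)

lemma swap_summable (hKs : ∀ m, Summable fun j => |K j m|)
    (hKC : ∀ m, (∑' j, |K j m|) ≤ C) (y : X) :
    Summable fun p : ℕ × ℕ => |K p.2 p.1| * ‖(y : ∀ _ : ℕ, ℂ) p.1‖ := by
  have h0 : (0 : ℕ × ℕ → ℝ) ≤ fun p : ℕ × ℕ => |K p.2 p.1| * ‖(y : ∀ _ : ℕ, ℂ) p.1‖ :=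
    fun p => mul_nonneg (abs_nonneg _) (norm_nonneg _)
  have h1 : ∀ m : ℕ, Summable fun j : ℕ => |K j m| * ‖(y : ∀ _ : ℕ, ℂ) m‖ :=
    fun m => (hKs m).mul_right _
  have h2 : Summable fun m : ℕ => ∑' j : ℕ, |K j m| * ‖(y : ∀ _ : ℕ, ℂ) m‖ := by
    refine Summable.of_nonneg_of_le
      (fun m => tsum_nonneg fun j => mul_nonneg (abs_nonneg _) (norm_nonneg _))
      (fun m => ?_) ((l1_summable y).mul_left C)
    rw [tsum_mul_right]
    exact mul_le_mul_of_nonneg_right (hKC m) (norm_nonneg _)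
  exact (summable_prod_of_nonneg h0).2 ⟨h1, h2⟩

lemma prod_summable (hKs : ∀ m, Summable fun j => |K j m|)
    (hKC : ∀ m, (∑' j, |K j m|) ≤ C) (y : X) :
    Summable fun q : ℕ × ℕ => |K q.1 q.2| * ‖(y : ∀ _ : ℕ, ℂ) q.2‖ := by
  have h := (swap_summable hKs hKC y).prod_symm
  exact h

lemma prod_parts (hKs : ∀ m, Summable fun j => |K j m|)
    (hKC : ∀ m, (∑' j, |K j m|) ≤ C) (y : X) :
    (∀ j, Summable fun m => |K j m| * ‖(y : ∀ _ : ℕ, ℂ) m‖) ∧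
      Summable fun j => ∑' m, |K j m| * ‖(y : ∀ _ : ℕ, ℂ) m‖ := by
  have h0 : (0 : ℕ × ℕ → ℝ) ≤ fun q : ℕ × ℕ => |K q.1 q.2| * ‖(y : ∀ _ : ℕ, ℂ) q.2‖ :=
    fun q => mul_nonneg (abs_nonneg _) (norm_nonneg _)
  exact (summable_prod_of_nonneg h0).1 (prod_summable hKs hKC y)

lemma B_summable (hKs : ∀ m, Summable fun j => |K j m|)
    (hKC : ∀ m, (∑' j, |K j m|) ≤ C) (y : X) :
    Summable fun j => ∑' m, |K j m| * ‖(y : ∀ _ : ℕ, ℂ) m‖ :=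
  (prod_parts hKs hKC y).2

lemma key_bound (hKs : ∀ m, Summable fun j => |K j m|)
    (hKC : ∀ m, (∑' j, |K j m|) ≤ C) (y : X) :
    (∑' j, ‖∑' m, (K j m : ℂ) * (y : ∀ _ : ℕ, ℂ) m‖) ≤ C * ‖y‖ := by
  have hrows : ∀ j, Summable fun m => |K j m| * ‖(y : ∀ _ : ℕ, ℂ) m‖ :=
    (prod_parts hKs hKC y).1
  have h1 : (∑' j, ‖∑' m, (K j m : ℂ) * (y : ∀ _ : ℕ, ℂ) m‖) ≤
      ∑' j, ∑' m, |K j m| * ‖(y : ∀ _ : ℕ, ℂ) m‖ := by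
    refine Summable.tsum_le_tsum (fun j => ?_) ?_ (B_summable hKs hKC y)
    · refine (norm_tsum_le_tsum_norm (row_norm_summable hKs hKC y j)).trans_eq ?_
      exact tsum_congr fun m => norm_coord _ _
    · refine Summable.of_nonneg_of_le (fun j => norm_nonneg _) (fun j => ?_)
        (B_summable hKs hKC y)
      refine (norm_tsum_le_tsum_norm (row_norm_summable hKs hKC y j)).trans_eq ?_
      exact tsum_congr fun m => norm_coord _ _
  refine h1.trans ?_
  have hcomm := Summable.tsum_comm' (f := fun j m => |K j m| * ‖(y : ∀ _ : ℕ, ℂ) m‖)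
    (prod_summable hKs hKC y) hrows (fun m => (hKs m).mul_right _)
  rw [← hcomm]
  have h2 : (∑' m, ∑' j, |K j m| * ‖(y : ∀ _ : ℕ, ℂ) m‖) =
      ∑' m, (∑' j, |K j m|) * ‖(y : ∀ _ : ℕ, ℂ) m‖ :=
    tsum_congr fun m => tsum_mul_right
  rw [h2, l1_norm y, ← tsum_mul_left]
  refine Summable.tsum_le_tsum (fun m => mul_le_mul_of_nonneg_right (hKC m) (norm_nonneg _)) ?_
    ((l1_summable y).mul_left C)
  refine Summable.of_nonneg_of_le
    (fun m => mul_nonneg (tsum_nonneg fun _ => abs_nonneg _) (norm_nonneg _))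
    (fun m => mul_le_mul_of_nonneg_right (hKC m) (norm_nonneg _))
    ((l1_summable y).mul_left C)

lemma mem_l1 (hKs : ∀ m, Summable fun j => |K j m|)
    (hKC : ∀ m, (∑' j, |K j m|) ≤ C) (y : X) :
    Memℓp (fun j => ∑' m, (K j m : ℂ) * (y : ∀ _ : ℕ, ℂ) m) 1 := by
  refine memℓp_gen ?_
  simp only [ENNReal.toReal_one, Real.rpow_one]
  refine Summable.of_nonneg_of_le (fun j => norm_nonneg _) (fun j => ?_)
    (B_summable hKs hKC y)
  refine (norm_tsum_le_tsum_norm (row_norm_summable hKs hKC y j)).trans_eq ?_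
  exact tsum_congr fun m => norm_coord _ _

noncomputable def hankelCLM (K : ℕ → ℕ → ℝ) (C : ℝ) (hKs : ∀ m, Summable fun j => |K j m|)
    (hKC : ∀ m, (∑' j, |K j m|) ≤ C) : X →L[ℂ] X :=
  LinearMap.mkContinuous
    { toFun := fun y => (⟨fun j => ∑' m, (K j m : ℂ) * (y : ∀ _ : ℕ, ℂ) m,
        mem_l1 hKs hKC y⟩ : X)
      map_add' := fun y z => by
        apply lp.ext; funext j
        show (∑' m, (K j m : ℂ) * ((y : ∀ _ : ℕ, ℂ) m + (z : ∀ _ : ℕ, ℂ) m)) =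
          (∑' m, (K j m : ℂ) * (y : ∀ _ : ℕ, ℂ) m) + ∑' m, (K j m : ℂ) * (z : ∀ _ : ℕ, ℂ) m
        rw [← Summable.tsum_add (summable_mul_of_bounded (fun m => kb hKs hKC j m) y)
          (summable_mul_of_bounded (fun m => kb hKs hKC j m) z)]
        exact tsum_congr fun m => mul_add _ _ _
      map_smul' := fun c y => by
        apply lp.ext; funext j
        show (∑' m, (K j m : ℂ) * (c * (y : ∀ _ : ℕ, ℂ) m)) =
          c * ∑' m, (K j m : ℂ) * (y : ∀ _ : ℕ, ℂ) m
        rw [← tsum_mul_left]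
        exact tsum_congr fun m => by ring }
    C (fun y => by
      rw [l1_norm]
      exact key_bound hKs hKC y)

lemma hankelCLM_apply (K : ℕ → ℕ → ℝ) (C : ℝ) (hKs : ∀ m, Summable fun j => |K j m|)
    (hKC : ∀ m, (∑' j, |K j m|) ≤ C) (y : X) (j : ℕ) :
    (hankelCLM K C hKs hKC y : ∀ _ : ℕ, ℂ) j = ∑' m, (K j m : ℂ) * (y : ∀ _ : ℕ, ℂ) m :=
  rfl

lemma norm_hankel_le (hKs : ∀ m, Summable fun j => |K j m|)
    (hKC : ∀ m, (∑' j, |K j m|) ≤ C) {T : X →L[ℂ] X}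
    (hT : ∀ y : X, ∀ j : ℕ, (T y : ∀ _ : ℕ, ℂ) j = ∑' m, (K j m : ℂ) * (y : ∀ _ : ℕ, ℂ) m) :
    ‖T‖ ≤ C := by
  refine T.opNorm_le_bound (hC0 hKs hKC) fun y => ?_
  rw [l1_norm (T y)]
  have h : (∑' j, ‖(T y : ∀ _ : ℕ, ℂ) j‖) = ∑' j, ‖∑' m, (K j m : ℂ) * (y : ∀ _ : ℕ, ℂ) m‖ :=
    tsum_congr fun j => by rw [hT y j]
  rw [h]
  exact key_bound hKs hKC y

end Kernel

section FiniteRank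

noncomputable def Lmap (N : ℕ) : (Fin N → ℂ) →ₗ[ℂ] X where
  toFun c := ∑ i : Fin N, c i • lp.single 1 (i : ℕ) (1 : ℂ)
  map_add' a b := by
    simp [add_smul, Finset.sum_add_distrib]
  map_smul' r a := by
    simp [smul_smul, Finset.smul_sum]

lemma mem_range_Lmap {N : ℕ} (f : X) (hf : ∀ k, N ≤ k → (f : ∀ _ : ℕ, ℂ) k = 0) :
    f ∈ LinearMap.range (Lmap N) := by
  refine ⟨fun i => (f : ∀ _ : ℕ, ℂ) (i : ℕ), ?_⟩
  apply lp.ext; funext k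
  have hcoe : (Lmap N (fun i => (f : ∀ _ : ℕ, ℂ) (i : ℕ)) : ∀ _ : ℕ, ℂ) k =
      ∑ i : Fin N, (f : ∀ _ : ℕ, ℂ) (i : ℕ) * (lp.single 1 (i : ℕ) (1 : ℂ) : ∀ _ : ℕ, ℂ) k := by
    simp only [Lmap, LinearMap.coe_mk, AddHom.coe_mk]
    rw [lp.coeFn_sum, Finset.sum_apply]
    simp
  rw [hcoe]
  by_cases hk : k < N
  · rw [Finset.sum_eq_single (⟨k, hk⟩ : Fin N)]
    · simp [lp.single_apply_self]
    · intro i _ hik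
      rw [lp.single_apply_ne (E := fun _ : ℕ => ℂ) 1 (i : ℕ) (1 : ℂ) (fun h => hik (Fin.ext h.symm)), mul_zero]
    · intro h; exact absurd (Finset.mem_univ _) h
  · rw [hf k (le_of_not_gt hk)]
    refine Finset.sum_eq_zero fun i _ => ?_
    rw [lp.single_apply_ne (E := fun _ : ℕ => ℂ) 1 (i : ℕ) (1 : ℂ) (fun h => hk (by rw [h]; exact i.isLt)), mul_zero]

lemma isCompact_of_finrank {V : Submodule ℂ X} [FiniteDimensional ℂ V] (T : X →L[ℂ] X)
    (h : ∀ y, T y ∈ V) : IsCompactOperator T := by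
  refine ⟨((↑) : V → X) '' Metric.closedBall (0 : V) ‖T‖, ?_, ?_⟩
  · exact (isCompact_closedBall (0 : V) ‖T‖).image continuous_subtype_val
  · refine Filter.mem_of_superset (Metric.closedBall_mem_nhds (0 : X) one_pos) ?_
    intro y hy
    refine ⟨⟨T y, h y⟩, ?_, rfl⟩
    rw [Metric.mem_closedBall, dist_zero_right]
    have h1 : ‖(⟨T y, h y⟩ : V)‖ = ‖T y‖ := rfl
    rw [h1]
    calc ‖T y‖ ≤ ‖T‖ * ‖y‖ := T.le_opNorm y
      _ ≤ ‖T‖ * 1 := by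
          have h2 : ‖y‖ ≤ 1 := by
            have := Metric.mem_closedBall.1 hy; rwa [dist_zero_right] at this
          exact mul_le_mul_of_nonneg_left h2 (norm_nonneg (T : X →L[ℂ] X))
      _ = ‖T‖ := mul_one _

end FiniteRank

section FSummable

variable {F : ℕ → ℝ}

lemma abs_summable (hlim : Tendsto F atTop (nhds 0))
    (hsum : Summable fun n : ℕ => (n : ℝ) * |F (n + 2) - F n|) :
    Summable fun k => |F k| := by
  set d : ℕ → ℝ := fun k => F (k + 2) - F k with hd
  have hd1 : Summable fun k => |d k| := by
    have h1 : Summable fun k : ℕ => ((k + 1 : ℕ) : ℝ) * |d (k + 1)| :=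
      (summable_nat_add_iff 1).2 hsum
    have h2 : Summable fun k => |d (k + 1)| := by
      refine Summable.of_nonneg_of_le (fun k => abs_nonneg _) (fun k => ?_) h1
      have hk1 : (1 : ℝ) ≤ ((k + 1 : ℕ) : ℝ) := by exact_mod_cast Nat.one_le_iff_ne_zero.2 (Nat.succ_ne_zero k)
      nlinarith [abs_nonneg (d (k + 1))]
    exact (summable_nat_add_iff 1).1 h2
  have hm1 : Summable fun m : ℕ => ((m : ℝ) + 1) * |d m| := by
    refine (hsum.add hd1).congr fun m => ?_
    push_cast
    ring
  have hG : Summable fun p : ℕ × ℕ => if 2 * p.2 ≤ p.1 then |d p.1| else 0 := by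
    have h0 : (0 : ℕ × ℕ → ℝ) ≤ fun p : ℕ × ℕ => if 2 * p.2 ≤ p.1 then |d p.1| else 0 :=
      fun p => by dsimp only; split <;> simp [abs_nonneg]
    refine (summable_prod_of_nonneg h0).2 ⟨?_, ?_⟩
    · intro m
      refine summable_of_ne_finset_zero (s := Finset.range (m + 1)) fun i hi => ?_
      rw [if_neg]
      simp only [Finset.mem_range] at hi
      omega
    · refine Summable.of_nonneg_of_le
        (fun m => tsum_nonneg fun i => by dsimp only; split <;> simp [abs_nonneg])
        (fun m => ?_) hm1
      rw [tsum_eq_sum (s := Finset.range (m + 1)) (fun i hi => by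
        rw [if_neg]
        simp only [Finset.mem_range] at hi
        omega)]
      calc (∑ i ∈ Finset.range (m + 1), if 2 * i ≤ m then |d m| else 0)
          ≤ ∑ _i ∈ Finset.range (m + 1), |d m| :=
            Finset.sum_le_sum fun i _ => by split <;> simp [abs_nonneg]
        _ = ((m : ℝ) + 1) * |d m| := by
            rw [Finset.sum_const, Finset.card_range]
            push_cast
            ring
  have hcomp : Summable fun p : ℕ × ℕ => |d (p.1 + 2 * p.2)| := by
    have hinj : Function.Injective (fun p : ℕ × ℕ => ((p.1 + 2 * p.2, p.2) : ℕ × ℕ)) := by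
      intro a b h
      have h1 := congrArg Prod.snd h
      have h2 := congrArg Prod.fst h
      simp only at h1 h2
      exact Prod.ext (by omega) h1
    have h := hG.comp_injective hinj
    refine h.congr fun p => ?_
    show (if 2 * p.2 ≤ p.1 + 2 * p.2 then |d (p.1 + 2 * p.2)| else 0) = _
    rw [if_pos (by omega)]
  have h0' : (0 : ℕ × ℕ → ℝ) ≤ fun p : ℕ × ℕ => |d (p.1 + 2 * p.2)| :=
    fun p => abs_nonneg _
  obtain ⟨hrow, hcol⟩ := (summable_prod_of_nonneg h0').1 hcomp
  have key : ∀ k, |F k| ≤ ∑' i, |d (k + 2 * i)| := by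
    intro k
    have hsum_d : Summable fun i => d (k + 2 * i) := by
      refine Summable.of_norm ?_
      simpa [Real.norm_eq_abs] using hrow k
    have hps : ∀ N : ℕ, ∑ i ∈ Finset.range N, d (k + 2 * i) = F (k + 2 * N) - F k := by
      intro N
      induction N with
      | zero => simp
      | succ N ih =>
        rw [Finset.sum_range_succ, ih]
        have h2 : k + 2 * (N + 1) = k + 2 * N + 2 := by ring
        rw [h2, hd]
        ring
    have hlim2 : Tendsto (fun N : ℕ => F (k + 2 * N) - F k) atTop (𝓝 (0 - F k)) := by
      refine Tendsto.sub_const ?_ _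
      refine hlim.comp ?_
      exact tendsto_atTop_atTop.2 fun b => ⟨b, fun a ha => by omega⟩
    have hlim1 : Tendsto (fun N => ∑ i ∈ Finset.range N, d (k + 2 * i)) atTop
        (𝓝 (∑' i, d (k + 2 * i))) := hsum_d.hasSum.tendsto_sum_nat
    have hlim1' : Tendsto (fun N : ℕ => F (k + 2 * N) - F k) atTop
        (𝓝 (∑' i, d (k + 2 * i))) := by
      refine hlim1.congr fun N => hps N
    have heq : (∑' i, d (k + 2 * i)) = 0 - F k := tendsto_nhds_unique hlim1' hlim2
    calc |F k| = |∑' i, d (k + 2 * i)| := by rw [heq, zero_sub, abs_neg]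
      _ ≤ ∑' i, |d (k + 2 * i)| := by
          have h := norm_tsum_le_tsum_norm (f := fun i => d (k + 2 * i))
            (by simpa [Real.norm_eq_abs] using hrow k)
          simpa [Real.norm_eq_abs] using h
  exact Summable.of_nonneg_of_le (fun k => abs_nonneg _) key hcol

lemma tail_summable (hFsum : Summable fun k => |F k|) (a : ℕ) :
    Summable fun j => |F (a + j)| := by
  refine ((summable_nat_add_iff a).2 hFsum).congr fun j => ?_
  rw [add_comm]

lemma tail_le_tail (hFsum : Summable fun k => |F k|) {s t : ℕ} (hst : s ≤ t) :
    (∑' j, |F (t + j)|) ≤ ∑' j, |F (s + j)| := by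
  refine Summable.tsum_le_tsum_of_inj (fun j => (t - s) + j) (add_right_injective (t - s))
    (fun c _ => abs_nonneg _) (fun j => ?_) (tail_summable hFsum t)
    (tail_summable hFsum s)
  show |F (t + j)| ≤ |F (s + ((t - s) + j))|
  have heq : t + j = s + ((t - s) + j) := by omega
  rw [heq]

end FSummable

end

end GLaux

open GLaux Topology

set_option maxHeartbeats 1600000 in
/-- The Hankel-type (Gelfand–Levitan) operator `(𝓕_n y)_j = Σ_m F(2n+m+j) y_m` is a
bounded, compact operator on `ℓ¹(ℤ₊)` with `‖𝓕_n‖ ≤ Σ_j |F(2n+j)|` and `‖𝓕_n‖ → 0`. -/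
theorem gelfand_levitan_operator_bounds (F : ℕ → ℝ)
    (hlim : Tendsto F atTop (nhds 0))
    (hsum : Summable fun n : ℕ => (n : ℝ) * |F (n + 2) - F n|) :
    ∃ 𝓕 : ℕ → (lp (fun _ : ℕ => ℂ) 1 →L[ℂ] lp (fun _ : ℕ => ℂ) 1),
      (∀ n : ℕ, 1 ≤ n → ∀ y : lp (fun _ : ℕ => ℂ) 1, ∀ j : ℕ,
        (𝓕 n y : ∀ _ : ℕ, ℂ) j = ∑' m : ℕ, (F (2 * n + m + j) : ℂ) * (y : ∀ _ : ℕ, ℂ) m) ∧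
      (∀ n : ℕ, 1 ≤ n → ‖𝓕 n‖ ≤ ∑' j : ℕ, |F (2 * n + j)|) ∧
      (∀ n : ℕ, 1 ≤ n → IsCompactOperator (𝓕 n)) ∧
      Tendsto (fun n : ℕ => ‖𝓕 n‖) atTop (nhds 0) := by
  have hFsum : Summable fun k => |F k| := abs_summable hlim hsum
  -- the kernel of `𝓕 n`
  set K : ℕ → ℕ → ℕ → ℝ := fun n j m => F (2 * n + m + j) with hK
  set S : ℕ → ℝ := fun n => ∑' j, |F (2 * n + j)| with hS
  have hKs : ∀ n m, Summable fun j => |K n j m| := by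
    intro n m
    exact tail_summable hFsum (2 * n + m)
  have hKC : ∀ n m, (∑' j, |K n j m|) ≤ S n := by
    intro n m
    exact tail_le_tail hFsum (by omega : 2 * n ≤ 2 * n + m)
  refine ⟨fun n => hankelCLM (K n) (S n) (hKs n) (hKC n), ?_, ?_, ?_, ?_⟩
  · intro n _ y j
    exact hankelCLM_apply (K n) (S n) (hKs n) (hKC n) y j
  · intro n _
    exact norm_hankel_le (hKs n) (hKC n)
      (fun y j => hankelCLM_apply (K n) (S n) (hKs n) (hKC n) y j)
  · -- compactness
    intro n _
    -- truncated kernels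
    set KN : ℕ → ℕ → ℕ → ℝ := fun N j m => if j < N then K n j m else 0 with hKN
    have hKNs : ∀ N m, Summable fun j => |KN N j m| := by
      intro N m
      refine Summable.of_nonneg_of_le (fun j => abs_nonneg _) (fun j => ?_) (hKs n m)
      simp only [hKN]
      split <;> simp [abs_nonneg]
    have hKNC : ∀ N m, (∑' j, |KN N j m|) ≤ S n := by
      intro N m
      refine le_trans (Summable.tsum_le_tsum (fun j => ?_) (hKNs N m) (hKs n m)) (hKC n m)
      simp only [hKN]
      split <;> simp [abs_nonneg]
    have htrunc_compact : ∀ N, IsCompactOperator (hankelCLM (KN N) (S n) (hKNs N) (hKNC N)) := by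
      intro N
      refine isCompact_of_finrank (V := LinearMap.range (Lmap N)) _ fun y => ?_
      refine mem_range_Lmap _ fun k hk => ?_
      rw [hankelCLM_apply]
      have hzero : ∀ m : ℕ, ((KN N k m : ℝ) : ℂ) * (y : ∀ _ : ℕ, ℂ) m = 0 := by
        intro m
        have : KN N k m = 0 := by
          simp only [hKN]
          rw [if_neg (show ¬ (k < N) by omega)]
        rw [this]
        simp
      rw [tsum_congr hzero, tsum_zero]
    -- difference kernels
    have hdiff : ∀ N, ‖hankelCLM (K n) (S n) (hKs n) (hKC n) -
        hankelCLM (KN N) (S n) (hKNs N) (hKNC N)‖ ≤ ∑' j, |F (2 * n + N + j)| := by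
      intro N
      set Kd : ℕ → ℕ → ℝ := fun j m => K n j m - KN N j m with hKd
      have hKds : ∀ m, Summable fun j => |Kd j m| := by
        intro m
        refine Summable.of_nonneg_of_le (fun j => abs_nonneg _) (fun j => ?_) (hKs n m)
        simp only [hKd, hKN]
        split <;> simp [abs_nonneg]
      have hKdC : ∀ m, (∑' j, |Kd j m|) ≤ ∑' j, |F (2 * n + N + j)| := by
        intro m
        have hzero : ∀ j < N, |Kd j m| = 0 := by
          intro j hj
          simp only [hKd, hKN]
          rw [if_pos hj]
          simp
        rw [← Summable.sum_add_tsum_nat_add N (hKds m), Finset.sum_eq_zero (fun j hj =>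
          hzero j (Finset.mem_range.1 hj)), zero_add]
        refine Summable.tsum_le_tsum_of_inj (fun i => m + i) (add_right_injective m)
          (fun c _ => abs_nonneg _) (fun i => ?_) ((summable_nat_add_iff N).2 (hKds m))
          (tail_summable hFsum (2 * n + N))
        have h1 : |Kd (i + N) m| = |F (2 * n + m + (i + N))| := by
          simp only [hKd, hKN, hK]
          rw [if_neg (show ¬ (i + N < N) by omega), sub_zero]
        have heq : 2 * n + m + (i + N) = 2 * n + N + (m + i) := by omega
        rw [h1, heq]
      refine norm_hankel_le hKds hKdC fun y j => ?_
      have h1 : ((hankelCLM (K n) (S n) (hKs n) (hKC n) -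
          hankelCLM (KN N) (S n) (hKNs N) (hKNC N)) y : ∀ _ : ℕ, ℂ) j =
          (∑' m, (K n j m : ℂ) * (y : ∀ _ : ℕ, ℂ) m) -
            ∑' m, (KN N j m : ℂ) * (y : ∀ _ : ℕ, ℂ) m := by
        rw [ContinuousLinearMap.sub_apply, lp.coeFn_sub, Pi.sub_apply,
          hankelCLM_apply, hankelCLM_apply]
      rw [h1, ← Summable.tsum_sub (summable_mul_of_bounded (fun m => kb (hKs n) (hKC n) j m) y)
        (summable_mul_of_bounded (fun m => kb (hKNs N) (hKNC N) j m) y)]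
      refine tsum_congr fun m => ?_
      simp only [hKd]
      push_cast
      ring
    -- tail tends to zero
    have htail : Tendsto (fun N : ℕ => ∑' j, |F (2 * n + N + j)|) atTop (𝓝 0) := by
      have h0 := tendsto_sum_nat_add fun k => |F k|
      have h1 : Tendsto (fun N : ℕ => 2 * n + N) atTop atTop :=
        tendsto_atTop_atTop.2 fun b => ⟨b, fun a ha => by omega⟩
      have h2 := h0.comp h1
      refine h2.congr fun N => ?_
      exact tsum_congr fun k => by rw [add_comm]
    have htendsto : Tendsto (fun N => hankelCLM (KN N) (S n) (hKNs N) (hKNC N)) atTop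
        (𝓝 (hankelCLM (K n) (S n) (hKs n) (hKC n))) := by
      rw [tendsto_iff_norm_sub_tendsto_zero]
      refine squeeze_zero (fun N => norm_nonneg _) (fun N => ?_) htail
      rw [norm_sub_rev]
      exact hdiff N
    exact isCompactOperator_of_tendsto htendsto
      (Filter.Eventually.of_forall fun N => htrunc_compact N)
  · -- tendsto of norms
    have hb : ∀ n, ‖hankelCLM (K n) (S n) (hKs n) (hKC n)‖ ≤ S n := fun n =>
      norm_hankel_le (hKs n) (hKC n)
        (fun y j => hankelCLM_apply (K n) (S n) (hKs n) (hKC n) y j)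
    refine squeeze_zero (fun n => norm_nonneg _) hb ?_
    have h0 := tendsto_sum_nat_add fun k => |F k|
    have h1 : Tendsto (fun n : ℕ => 2 * n) atTop atTop :=
      tendsto_atTop_atTop.2 fun b => ⟨b, fun a ha => by omega⟩
    have h2 := h0.comp h1
    refine h2.congr fun n => ?_
    exact tsum_congr fun k => by rw [add_comm]
end

section
/- Let D = diag(d₀, d₁, …) with d_j ≥ 0 and Σ_j (j+1) d_j < ∞, and let R₀(z) be the resolvent of the discrete Laplacian at λ(z), |z| < 1. Then B(z) = D^{1/2} R₀(z) D^{1/2} is a Hilbert–Schmidt operator with ‖B(z)‖₂ ≤ Σ_j (j+1) d_j, uniformly in z ∈ 𝔻. -/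
lemma rbound (z : ℂ) (hz : ‖z‖ < 1) (n m : ℕ) :
    ‖(z ^ (max n m - min n m) - z ^ (n + m + 2)) / (z - z⁻¹)‖ ≤ (min n m : ℝ) + 1 := by
  rcases eq_or_ne z 0 with rfl | hz0
  · simp
    positivity
  · set a := min n m with ha
    set b := max n m with hb
    have hab : a ≤ b := min_le_max
    have hnm : n + m = a + b := (min_add_max n m).symm
    have hz2 : (z ^ 2 - 1) ≠ 0 := by
      intro h
      have : z ^ 2 = 1 := by linear_combination h
      have : ‖z ^ 2‖ = 1 := by rw [this]; simp
      rw [norm_pow] at this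
      nlinarith [norm_nonneg z]
    have hden : z - z⁻¹ ≠ 0 := by
      intro h
      apply hz2
      field_simp at h
      linear_combination h
    set S : ℂ := ∑ i ∈ Finset.range (a + 1), (z ^ 2) ^ i with hS
    have hgeo : S * (z ^ 2 - 1) = (z ^ 2) ^ (a + 1) - 1 := geom_sum_mul _ _
    have hpow : z ^ (n + m + 2) = z ^ (b - a) * (z ^ 2) ^ (a + 1) := by
      rw [← pow_mul, ← pow_add]
      congr 1
      omega
    have key : (z ^ (b - a) - z ^ (n + m + 2)) / (z - z⁻¹) = -(z ^ (b - a + 1) * S) := by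
      rw [div_eq_iff hden, hpow]
      field_simp
      ring_nf
      linear_combination (z ^ (b - a + 1)) * hgeo
    rw [key, norm_neg, norm_mul, norm_pow]
    have h1 : ‖z‖ ^ (b - a + 1) ≤ 1 := pow_le_one₀ (norm_nonneg z) hz.le
    have h2 : ‖S‖ ≤ (a : ℝ) + 1 := by
      calc ‖S‖ ≤ ∑ i ∈ Finset.range (a + 1), ‖(z ^ 2) ^ i‖ := norm_sum_le _ _
      _ ≤ ∑ i ∈ Finset.range (a + 1), 1 := by
          apply Finset.sum_le_sum
          intro i _
          rw [norm_pow, norm_pow]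
          exact pow_le_one₀ (by positivity) (pow_le_one₀ (norm_nonneg z) hz.le)
      _ = (a : ℝ) + 1 := by simp
    calc ‖z‖ ^ (b - a + 1) * ‖S‖ ≤ 1 * ((a : ℝ) + 1) :=
          mul_le_mul h1 h2 (norm_nonneg _) zero_le_one
    _ = (a : ℝ) + 1 := one_mul _
    _ = (min n m : ℝ) + 1 := by rw [ha]; push_cast; ring

/-- If `D = diag(d₀, d₁, …)` with `d_j ≥ 0` and `Σ (j+1)d_j < ∞`, and `r_{nm}(z)` are the
resolvent entries of the discrete Laplacian at `λ(z)`, `|z| < 1`, then the matrix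
`B(z) = D^{1/2} R₀(z) D^{1/2}` is Hilbert–Schmidt with
`‖B(z)‖₂ ≤ Σ_j (j+1) d_j`, uniformly in `z`. -/
theorem edged_resolvent_hilbert_schmidt (d : ℕ → ℝ) (hd : ∀ j : ℕ, 0 ≤ d j)
    (hsum : Summable fun j : ℕ => ((j : ℝ) + 1) * d j)
    (z : ℂ) (hz : ‖z‖ < 1)
    (r : ℕ → ℕ → ℂ)
    (hr : ∀ n m : ℕ, r n m = (z ^ (max n m - min n m) - z ^ (n + m + 2)) / (z - z⁻¹)) :
    (Summable fun p : ℕ × ℕ =>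
      ‖(Real.sqrt (d p.1) : ℂ) * r p.1 p.2 * (Real.sqrt (d p.2) : ℂ)‖ ^ 2) ∧
    (∑' p : ℕ × ℕ, ‖(Real.sqrt (d p.1) : ℂ) * r p.1 p.2 * (Real.sqrt (d p.2) : ℂ)‖ ^ 2)
      ≤ (∑' j : ℕ, ((j : ℝ) + 1) * d j) ^ 2 := by
  have hC : ∀ j : ℕ, 0 ≤ ((j : ℝ) + 1) * d j := fun j => mul_nonneg (by positivity) (hd j)
  have hbd : ∀ p : ℕ × ℕ,
      ‖(Real.sqrt (d p.1) : ℂ) * r p.1 p.2 * (Real.sqrt (d p.2) : ℂ)‖ ^ 2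
        ≤ (((p.1 : ℝ) + 1) * d p.1) * (((p.2 : ℝ) + 1) * d p.2) := by
    rintro ⟨n, m⟩
    simp only
    rw [norm_mul, norm_mul, Complex.norm_real, Complex.norm_real,
      Real.norm_eq_abs, Real.norm_eq_abs, abs_of_nonneg (Real.sqrt_nonneg _),
      abs_of_nonneg (Real.sqrt_nonneg _)]
    have hrb : ‖r n m‖ ≤ (min n m : ℝ) + 1 := by rw [hr]; exact rbound z hz n m
    have hminsq : ((min n m : ℝ) + 1) ^ 2 ≤ ((n : ℝ) + 1) * ((m : ℝ) + 1) := by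
      rcases le_total n m with h | h
      · have h' : (n : ℝ) ≤ m := by exact_mod_cast h
        rw [min_eq_left h']
        nlinarith
      · have h' : (m : ℝ) ≤ n := by exact_mod_cast h
        rw [min_eq_right h']
        nlinarith
    have hsq : ‖r n m‖ ^ 2 ≤ ((n : ℝ) + 1) * ((m : ℝ) + 1) := by
      calc ‖r n m‖ ^ 2 ≤ ((min n m : ℝ) + 1) ^ 2 := by
            apply sq_le_sq' <;> nlinarith [norm_nonneg (r n m)]
      _ ≤ _ := hminsq
    have h1 : (Real.sqrt (d n) * ‖r n m‖ * Real.sqrt (d m)) ^ 2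
        = d n * d m * ‖r n m‖ ^ 2 := by
      rw [mul_pow, mul_pow, Real.sq_sqrt (hd n), Real.sq_sqrt (hd m)]
      ring
    rw [h1]
    calc d n * d m * ‖r n m‖ ^ 2 ≤ d n * d m * (((n : ℝ) + 1) * ((m : ℝ) + 1)) := by
          apply mul_le_mul_of_nonneg_left hsq (mul_nonneg (hd n) (hd m))
    _ = (((n : ℝ) + 1) * d n) * (((m : ℝ) + 1) * d m) := by ring
  have hprod : Summable fun p : ℕ × ℕ =>
      (((p.1 : ℝ) + 1) * d p.1) * (((p.2 : ℝ) + 1) * d p.2) :=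
    hsum.mul_of_nonneg hsum hC hC
  have hsummable : Summable fun p : ℕ × ℕ =>
      ‖(Real.sqrt (d p.1) : ℂ) * r p.1 p.2 * (Real.sqrt (d p.2) : ℂ)‖ ^ 2 :=
    Summable.of_nonneg_of_le (fun p => by positivity) hbd hprod
  refine ⟨hsummable, ?_⟩
  calc (∑' p : ℕ × ℕ, ‖(Real.sqrt (d p.1) : ℂ) * r p.1 p.2 * (Real.sqrt (d p.2) : ℂ)‖ ^ 2)
      ≤ ∑' p : ℕ × ℕ, (((p.1 : ℝ) + 1) * d p.1) * (((p.2 : ℝ) + 1) * d p.2) :=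
        Summable.tsum_le_tsum hbd hsummable hprod
  _ = (∑' j : ℕ, ((j : ℝ) + 1) * d j) ^ 2 := by
        rw [sq]
        exact (Summable.tsum_mul_tsum hsum hsum hprod).symm
end
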